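/- Let a > 0, n a positive integer, and W̃ an N×N matrix with nonnegative entries and positive diagonal entries w̃_{ii} > 0. Let v : [0,T) → ℝ^N be differentiable with v(0) ∈ (0,1)^N and satisfy for all t the gradient-flow system ∂_t v_i = Σ_{j : v_j ≠ v_i} w̃_{ij}·(Φ_{a,n}(v_j − v_i) − Φ_{a,n}(v_j + v_i)) − Σ_{j : v_j = v_i} w̃_{ij}·Φ_{a,n}(2 v_i). Then v(t) ∈ (0,1)^N for all t ∈ [0,T); i.e., no position ever reaches the domain boundaries 0 or 1. -/

import Mathlib

open scoped Classical
open Filter Set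

/-- Flux `Φ_{a,n}(s) = a·n·(s−1)^(2n−1)` for `s ≥ 0`, extended by
`Φ_{a,n}(s) = a·n·(s+1)^(2n−1)` for `s < 0`. -/
noncomputable def flux (a : ℝ) (n : ℕ) (s : ℝ) : ℝ :=
  if 0 ≤ s then a * n * (s - 1) ^ (2 * n - 1) else a * n * (s + 1) ^ (2 * n - 1)

/-!
A solution can leave `(0,1)^N` only through a face `v_i = 0` or `v_i = 1` while the other
coordinates are still in `[0,1]`. On such a face every interaction with `v_j ≠ v_i` vanishes:
for `v_i = 0` trivially, for `v_i = 1` because `Φ_{a,n}(x - 1) = Φ_{a,n}(x + 1)` on `[-1,1)`.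
The remaining self-interaction `-Φ_{a,n}(2 v_i) ∑_{v_j = v_i} w̃_{ij}` has positive weight, and
`Φ_{a,n}(0) = -an < 0 < an = Φ_{a,n}(2)` makes it point strictly into the cube, contradicting
the sign of the left derivative of `v_i` at the first exit time.
-/

open Topology

section FirstExit

variable {α : Type*} [TopologicalSpace α] {f : ℝ → α} {U : Set α} {a b : ℝ}

theorem exists_first_exit_time (hU : IsOpen U) (hf : ContinuousOn f (Icc a b)) (hab : a ≤ b)
    (ha : f a ∈ U) (hb : f b ∉ U) :
    ∃ c ∈ Ioc a b, f c ∉ U ∧ MapsTo f (Icc a c) (closure U) := by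
  set E := Icc a b ∩ f ⁻¹' Uᶜ
  have hE : IsClosed E := hf.preimage_isClosed_of_isClosed isClosed_Icc hU.isClosed_compl
  have hbdd : BddBelow E := ⟨a, fun s hs => hs.1.1⟩
  obtain ⟨⟨hac, hcb⟩, hc⟩ : sInf E ∈ E := hE.csInf_mem ⟨b, ⟨hab, le_rfl⟩, hb⟩ hbdd
  set c := sInf E
  have hac' : a < c := hac.lt_of_ne fun h => hc (h ▸ ha)
  have hbefore : MapsTo f (Ico a c) U := fun s hs => by
    by_contra hs'
    exact (csInf_le hbdd ⟨⟨hs.1, hs.2.le.trans hcb⟩, hs'⟩).not_gt hs.2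
  have hcU : f c ∈ closure U := by
    have hcont : ContinuousWithinAt f (Ico a c) c :=
      (hf c ⟨hac, hcb⟩).mono (Ico_subset_Icc_self.trans (Icc_subset_Icc_right hcb))
    exact closure_mono (image_subset_iff.2 hbefore)
      (hcont.mem_closure_image (by rw [closure_Ico hac'.ne]; exact right_mem_Icc.2 hac))
  refine ⟨c, ⟨hac', hcb⟩, hc, fun s hs => ?_⟩
  rcases hs.2.lt_or_eq with hsc | rfl
  · exact subset_closure (hbefore ⟨hs.1, hsc⟩)
  · exact hcU

end FirstExit

theorem HasDerivAt.nonpos_of_isLocalMinOn_Iic {f : ℝ → ℝ} {f' c : ℝ} (hf : HasDerivAt f f' c)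
    (hmin : IsLocalMinOn f (Iic c) c) : f' ≤ 0 := by
  have hdir : (-1 : ℝ) ∈ posTangentConeAt (Iic c) c :=
    mem_posTangentConeAt_of_segment_subset <| by
      rw [segment_symm]; exact (segment_subset_Icc (by linarith)).trans Icc_subset_Iic_self
  simpa using hmin.hasFDerivWithinAt_nonneg hf.hasDerivWithinAt.hasFDerivWithinAt hdir

theorem HasDerivAt.nonneg_of_isLocalMaxOn_Iic {f : ℝ → ℝ} {f' c : ℝ} (hf : HasDerivAt f f' c)
    (hmax : IsLocalMaxOn f (Iic c) c) : 0 ≤ f' := by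
  simpa using hf.neg.nonpos_of_isLocalMinOn_Iic hmax.neg

section Flux

variable {a : ℝ} {n : ℕ}

theorem flux_zero (hn : 0 < n) : flux a n 0 = -(a * n) := by
  have hodd : Odd (2 * n - 1) := ⟨n - 1, by omega⟩
  simp [flux, hodd.neg_one_pow]

theorem flux_two : flux a n 2 = a * n := by
  norm_num [flux]

theorem flux_sub_one_eq_flux_add_one {x : ℝ} (hx : x ∈ Ico (-1) 1) :
    flux a n (x - 1) = flux a n (x + 1) := by
  rw [flux, flux, if_neg (by linarith [hx.2]), if_pos (by linarith [hx.1])]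
  ring_nf

end Flux

noncomputable def flowVelocity {ι : Type*} [Fintype ι] (a : ℝ) (n : ℕ) (W : Matrix ι ι ℝ)
    (x : ι → ℝ) (i : ι) : ℝ :=
  (∑ j ∈ Finset.univ.filter (fun j => x j ≠ x i),
      W i j * (flux a n (x j - x i) - flux a n (x j + x i))) -
    ∑ j ∈ Finset.univ.filter (fun j => x j = x i), W i j * flux a n (2 * x i)

section FlowVelocity

variable {ι : Type*} [Fintype ι] {a : ℝ} {n : ℕ} {W : Matrix ι ι ℝ} {x : ι → ℝ} {i : ι}

theorem sum_filter_eq_pos (hW : ∀ j, 0 ≤ W i j) (hdiag : 0 < W i i) :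
    0 < ∑ j ∈ Finset.univ.filter (fun j => x j = x i), W i j :=
  Finset.sum_pos' (fun j _ => hW j) ⟨i, by simp, hdiag⟩

theorem flowVelocity_of_eq_zero (hn : 0 < n) (hx : x i = 0) :
    flowVelocity a n W x i = a * n * ∑ j ∈ Finset.univ.filter (fun j => x j = x i), W i j := by
  have hcross : ∀ j ∈ Finset.univ.filter (fun j => x j ≠ x i),
      W i j * (flux a n (x j - x i) - flux a n (x j + x i)) = 0 := fun j _ => by
    rw [hx, sub_zero, add_zero, sub_self, mul_zero]
  rw [flowVelocity, Finset.sum_eq_zero hcross, zero_sub, Finset.mul_sum,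
    ← Finset.sum_neg_distrib]
  refine Finset.sum_congr rfl fun j _ => ?_
  rw [hx, mul_zero, flux_zero hn]
  ring

theorem flowVelocity_of_eq_one (hx : x i = 1) (hrange : ∀ j, x j ∈ Icc (-1) 1) :
    flowVelocity a n W x i = -(a * n * ∑ j ∈ Finset.univ.filter (fun j => x j = x i), W i j) := by
  have hcross : ∀ j ∈ Finset.univ.filter (fun j => x j ≠ x i),
      W i j * (flux a n (x j - x i) - flux a n (x j + x i)) = 0 := by
    intro j hj
    have hj : x j ≠ 1 := hx ▸ (Finset.mem_filter.1 hj).2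
    rw [hx, flux_sub_one_eq_flux_add_one ⟨(hrange j).1, (hrange j).2.lt_of_ne hj⟩, sub_self,
      mul_zero]
  rw [flowVelocity, Finset.sum_eq_zero hcross, zero_sub, Finset.mul_sum]
  refine congrArg Neg.neg (Finset.sum_congr rfl fun j _ => ?_)
  rw [hx, mul_one, flux_two]
  ring

theorem flowVelocity_pos_of_eq_zero (ha : 0 < a) (hn : 0 < n) (hW : ∀ j, 0 ≤ W i j)
    (hdiag : 0 < W i i) (hx : x i = 0) : 0 < flowVelocity a n W x i := by
  rw [flowVelocity_of_eq_zero hn hx]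
  exact mul_pos (mul_pos ha (Nat.cast_pos.2 hn)) (sum_filter_eq_pos hW hdiag)

theorem flowVelocity_neg_of_eq_one (ha : 0 < a) (hn : 0 < n) (hW : ∀ j, 0 ≤ W i j)
    (hdiag : 0 < W i i) (hx : x i = 1) (hrange : ∀ j, x j ∈ Icc (-1) 1) :
    flowVelocity a n W x i < 0 := by
  rw [flowVelocity_of_eq_one hx hrange, neg_lt_zero]
  exact mul_pos (mul_pos ha (Nat.cast_pos.2 hn)) (sum_filter_eq_pos hW hdiag)

end FlowVelocity

theorem stmt3 (a : ℝ) (ha : 0 < a) (n : ℕ) (hn : 0 < n) (N : ℕ)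
    (W : Matrix (Fin N) (Fin N) ℝ) (hW : ∀ i j, 0 ≤ W i j) (hdiag : ∀ i, 0 < W i i)
    (T : ℝ) (v : ℝ → Fin N → ℝ)
    (hinit : ∀ i, v 0 i ∈ Set.Ioo (0 : ℝ) 1)
    (hode : ∀ t ∈ Set.Ico (0 : ℝ) T, ∀ i, HasDerivAt (fun s => v s i)
      ((∑ j ∈ Finset.univ.filter (fun j => v t j ≠ v t i),
          W i j * (flux a n (v t j - v t i) - flux a n (v t j + v t i))) -
        ∑ j ∈ Finset.univ.filter (fun j => v t j = v t i),
          W i j * flux a n (2 * v t i)) t) :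
    ∀ t ∈ Set.Ico (0 : ℝ) T, ∀ i, v t i ∈ Set.Ioo (0 : ℝ) 1 := by
  intro t ht
  rw [← mem_univ_pi]
  by_contra hexit
  have hcont : ContinuousOn v (Icc 0 t) := continuousOn_pi.2 fun i s hs =>
    (hode s ⟨hs.1, hs.2.trans_lt ht.2⟩ i).continuousAt.continuousWithinAt
  obtain ⟨c, ⟨hc0, hct⟩, hcU, hclosure⟩ := exists_first_exit_time
    (isOpen_set_pi finite_univ fun _ _ => isOpen_Ioo) hcont ht.1 (mem_univ_pi.2 hinit) hexit
  simp only [closure_pi_set, closure_Ioo zero_ne_one] at hclosure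
  have hcube : ∀ s ∈ Icc 0 c, ∀ j, v s j ∈ Icc 0 1 := fun s hs j => hclosure hs j (mem_univ j)
  have hvc : ∀ j, v c j ∈ Icc 0 1 := hcube c (right_mem_Icc.2 hc0.le)
  obtain ⟨i, hi⟩ : ∃ i, v c i ∉ Ioo 0 1 := by simpa [mem_univ_pi] using hcU
  have hderiv : HasDerivAt (fun s => v s i) (flowVelocity a n W (v c) i) c :=
    hode c ⟨hc0.le, hct.trans_lt ht.2⟩ i
  have hnear : Ioc 0 c ∈ 𝓝[≤] c := Ioc_mem_nhdsLE hc0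
  rcases eq_endpoints_or_mem_Ioo_of_mem_Icc (hvc i) with h0 | h1 | h
  · have hmin : IsLocalMinOn (fun s => v s i) (Iic c) c := mem_of_superset hnear fun s hs =>
      show v c i ≤ v s i from h0 ▸ (hcube s (Ioc_subset_Icc_self hs) i).1
    exact (flowVelocity_pos_of_eq_zero ha hn (hW i) (hdiag i) h0).not_ge
      (hderiv.nonpos_of_isLocalMinOn_Iic hmin)
  · have hmax : IsLocalMaxOn (fun s => v s i) (Iic c) c := mem_of_superset hnear fun s hs =>
      show v s i ≤ v c i from h1 ▸ (hcube s (Ioc_subset_Icc_self hs) i).2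
    have hrange : ∀ j, v c j ∈ Icc (-1) 1 := fun j => Icc_subset_Icc (by norm_num) le_rfl (hvc j)
    exact (flowVelocity_neg_of_eq_one ha hn (hW i) (hdiag i) h1 hrange).not_ge
      (hderiv.nonneg_of_isLocalMaxOn_Iic hmax)
  · exact hi h
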